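/- Let W be a Wang tile set and μ a shift-invariant Borel probability measure on (ℤ × ℤ) → W with μ(Ω_W) = 1. Then for every color a ∈ C: the sum over all tiles w with east w = a of μ({T : T(0,0) = w}) equals the sum over all tiles w with west w = a of μ({T : T(0,0) = w}); and the sum over all tiles w with north w = a of μ({T : T(0,0) = w}) equals the sum over all tiles w with south w = a of μ({T : T(0,0) = w}). -/

import Mathlib

/-! Since `T ∈ Ω` forces `east (T 0) = west (T (1,0))` almost surely, the frequency of tiles with
east colour `a` at the origin equals that of tiles with west colour `a` at `(1,0)`, which by shift
invariance is the frequency of tiles with west colour `a` at the origin; vertically likewise. -/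

open MeasureTheory Finset

/-- The tiling space of a Wang tile set. -/
def WangTilingSpace {W C : Type*} (north south east west : W → C) :
    Set ((ℤ × ℤ) → W) :=
  {T | ∀ x y : ℤ,
    east (T (x, y)) = west (T (x + 1, y)) ∧ north (T (x, y)) = south (T (x, y + 1))}

/-- The shift action: `(σ_u T)(v) = T(v + u)`. -/
def wangShift {W : Type*} (u : ℤ × ℤ) (T : (ℤ × ℤ) → W) : (ℤ × ℤ) → W :=
  fun v => T (v + u)

section

variable {W : Type*} [MeasurableSpace W] [DiscreteMeasurableSpace W]

theorem sum_filter_measure_eval_eq {ι C : Type*} [Fintype W] [DecidableEq C]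
    (μ : Measure (ι → W)) (p : ι) (f : W → C) (a : C) :
    ∑ w ∈ univ.filter (fun w => f w = a), μ {T : ι → W | T p = w} =
      μ {T : ι → W | f (T p) = a} := by
  rw [← Set.preimage_ofPred_eq (p := (f · = a)), ← coe_filter_univ]
  exact sum_measure_preimage_singleton (f := fun T : ι → W => T p) _
    fun _ _ => measurable_pi_apply p .of_discrete

theorem measurableSet_setOf_eval_pair {ι : Type*} [Countable W] (p q : ι) (R : W → W → Prop) :
    MeasurableSet {T : ι → W | R (T p) (T q)} := by
  have hm : Measurable fun T : ι → W => (T p, T q) :=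
    (measurable_pi_apply p).prodMk (measurable_pi_apply q)
  exact hm (.of_discrete (s := {z : W × W | R z.1 z.2}))

theorem measurableSet_wangTilingSpace {C : Type*} [Countable W]
    (north south east west : W → C) :
    MeasurableSet (WangTilingSpace north south east west) := by
  simp only [WangTilingSpace, Set.ofPred_forall, Set.ofPred_and]
  exact .iInter fun x => .iInter fun y =>
    (measurableSet_setOf_eval_pair _ _ fun w w' => east w = west w').inter
      (measurableSet_setOf_eval_pair _ _ fun w w' => north w = south w')

theorem measure_eval_mem_eq_of_map_wangShift {μ : Measure ((ℤ × ℤ) → W)} {u : ℤ × ℤ}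
    (hinv : Measure.map (wangShift u) μ = μ) (s : Set W) :
    μ {T | T u ∈ s} = μ {T | T 0 ∈ s} := by
  have hshift : Measurable (wangShift (W := W) u) :=
    measurable_pi_lambda _ fun v => measurable_pi_apply (v + u)
  have hpre : wangShift u ⁻¹' {T | T 0 ∈ s} = {T | T u ∈ s} := by simp [wangShift]
  rw [← hpre]
  exact MeasurePreserving.measure_preimage ⟨hshift, hinv⟩
    (measurable_pi_apply 0 (.of_discrete (s := s))).nullMeasurableSet

theorem measure_comp_eval_eq_of_ae_eq_shift {C : Type*} {μ : Measure ((ℤ × ℤ) → W)}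
    {u : ℤ × ℤ} (hinv : Measure.map (wangShift u) μ = μ) {f g : W → C}
    (hfg : ∀ᵐ T ∂μ, f (T 0) = g (T u)) (a : C) :
    μ {T | f (T 0) = a} = μ {T | g (T 0) = a} :=
  calc μ {T | f (T 0) = a} = μ {T | T u ∈ g ⁻¹' {a}} :=
        measure_congr <| hfg.mono fun T hT =>
          show (f (T 0) = a) = (g (T u) = a) by rw [hT]
    _ = μ {T | g (T 0) = a} := measure_eval_mem_eq_of_map_wangShift hinv _

theorem ae_mem_wangTilingSpace {C : Type*} [Countable W] {north south east west : W → C}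
    {μ : Measure ((ℤ × ℤ) → W)} [IsProbabilityMeasure μ]
    (hΩ : μ (WangTilingSpace north south east west) = 1) :
    ∀ᵐ T ∂μ, T ∈ WangTilingSpace north south east west := by
  rw [ae_iff_measure_eq (p := (· ∈ WangTilingSpace north south east west))
    (measurableSet_wangTilingSpace _ _ _ _).nullMeasurableSet]
  simpa using hΩ

end

theorem switching_rules_general
    {W C : Type*} [Fintype W] [DecidableEq C]
    [TopologicalSpace W] [DiscreteTopology W] [MeasurableSpace W] [BorelSpace W]
    (north south east west : W → C)
    (μ : Measure ((ℤ × ℤ) → W)) [IsProbabilityMeasure μ]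
    (hinv : ∀ u : ℤ × ℤ, Measure.map (wangShift u) μ = μ)
    (hΩ : μ (WangTilingSpace north south east west) = 1)
    (a : C) :
    (∑ w ∈ univ.filter (fun w => east w = a), μ {T : (ℤ × ℤ) → W | T (0, 0) = w}) =
      (∑ w ∈ univ.filter (fun w => west w = a), μ {T : (ℤ × ℤ) → W | T (0, 0) = w}) ∧
    (∑ w ∈ univ.filter (fun w => north w = a), μ {T : (ℤ × ℤ) → W | T (0, 0) = w}) =
      (∑ w ∈ univ.filter (fun w => south w = a), μ {T : (ℤ × ℤ) → W | T (0, 0) = w}) := by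
  have hae := ae_mem_wangTilingSpace hΩ
  simp only [sum_filter_measure_eval_eq]
  constructor
  · exact measure_comp_eval_eq_of_ae_eq_shift (hinv (1, 0))
      (hae.mono fun T hT => (hT 0 0).1) a
  · exact measure_comp_eval_eq_of_ae_eq_shift (hinv (0, 1))
      (hae.mono fun T hT => (hT 0 0).2) a

/-- the switching rules for the tile frequencies of a shift-invariant
probability measure concentrated on the tiling space. -/
theorem switching_rules
    {W C : Type*} [Fintype W] [Nonempty W] [Fintype C] [DecidableEq C]
    [TopologicalSpace W] [DiscreteTopology W] [MeasurableSpace W] [BorelSpace W]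
    (north south east west : W → C)
    (μ : Measure ((ℤ × ℤ) → W)) [IsProbabilityMeasure μ]
    (hinv : ∀ u : ℤ × ℤ, Measure.map (wangShift u) μ = μ)
    (hΩ : μ (WangTilingSpace north south east west) = 1)
    (a : C) :
    (∑ w ∈ univ.filter (fun w => east w = a), μ {T : (ℤ × ℤ) → W | T (0, 0) = w}) =
      (∑ w ∈ univ.filter (fun w => west w = a), μ {T : (ℤ × ℤ) → W | T (0, 0) = w}) ∧
    (∑ w ∈ univ.filter (fun w => north w = a), μ {T : (ℤ × ℤ) → W | T (0, 0) = w}) =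
      (∑ w ∈ univ.filter (fun w => south w = a), μ {T : (ℤ × ℤ) → W | T (0, 0) = w}) :=
  switching_rules_general north south east west μ hinv hΩ a
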